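/- For all real numbers a, b with a ≥ 0, b ≥ 0, 2a + b = 1 and a < 1/6, and all real numbers x < y, there exists a function f : ℝ → ℝ convex and continuous on [x, y] such that a·f(x) + b·f((x+y)/2) + a·f(y) < (1/(y-x)²) · ∫_x^y ∫_x^y f((s+t)/2) ds dt. -/

import Mathlib

lemma hasDerivAt_mul_abs (w : ℝ) : HasDerivAt (fun u : ℝ => u * |u|) (2 * |w|) w := by
  rcases lt_trichotomy w 0 with hw | hw | hw
  · have h : HasDerivAt (fun u : ℝ => -(u ^ 2)) (2 * |w|) w := by
      have := (hasDerivAt_pow 2 w).neg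
      refine this.congr_deriv ?_
      rw [abs_of_neg hw]; ring
    refine h.congr_of_eventuallyEq ?_
    filter_upwards [Iio_mem_nhds hw] with u hu
    rw [abs_of_neg hu]; ring
  · subst hw
    rw [hasDerivAt_iff_tendsto_slope]
    have h1 : (fun u : ℝ => |u|) =ᶠ[nhdsWithin 0 {(0:ℝ)}ᶜ] slope (fun u : ℝ => u * |u|) 0 := by
      filter_upwards [self_mem_nhdsWithin] with u hu
      have hu' : u ≠ 0 := by simpa using hu
      simp only [slope_def_field]
      field_simp
      simp
    refine Filter.Tendsto.congr' h1 ?_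
    have : Filter.Tendsto (fun u : ℝ => |u|) (nhds 0) (nhds (2 * |(0:ℝ)|)) := by
      simpa using continuous_abs.tendsto (0:ℝ)
    exact this.mono_left nhdsWithin_le_nhds
  · have h : HasDerivAt (fun u : ℝ => u ^ 2) (2 * |w|) w := by
      have := hasDerivAt_pow 2 w
      refine this.congr_deriv ?_
      rw [abs_of_pos hw]; ring
    refine h.congr_of_eventuallyEq ?_
    filter_upwards [Ioi_mem_nhds hw] with u hu
    rw [abs_of_pos hu]; ring

theorem three_point_sharp (a b : ℝ) (ha : 0 ≤ a) (hb : 0 ≤ b)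
    (hab : 2 * a + b = 1) (ha6 : a < 1 / 6) (x y : ℝ) (hxy : x < y) :
    ∃ f : ℝ → ℝ, ConvexOn ℝ (Set.Icc x y) f ∧ ContinuousOn f (Set.Icc x y) ∧
      a * f x + b * f ((x + y) / 2) + a * f y
        < (1 / (y - x) ^ 2) * ∫ s in x..y, ∫ t in x..y, f ((s + t) / 2) := by
  set m : ℝ := (x + y) / 2 with hm
  refine ⟨fun u => |u - m|, ?_, ?_, ?_⟩
  · refine ⟨convex_Icc x y, fun p _ q _ c d hc hd hcd => ?_⟩
    simp only [smul_eq_mul]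
    have he : c * p + d * q - m = c * (p - m) + d * (q - m) := by
      have : c = 1 - d := by linarith
      rw [this]; ring
    rw [he]
    calc |c * (p - m) + d * (q - m)| ≤ |c * (p - m)| + |d * (q - m)| := abs_add_le _ _
      _ = c * |p - m| + d * |q - m| := by
          rw [abs_mul, abs_mul, abs_of_nonneg hc, abs_of_nonneg hd]
  · exact (continuous_abs.comp (continuous_id.sub continuous_const)).continuousOn
  · have hyx : (0:ℝ) < y - x := by linarith
    -- inner integral
    have hinner : ∀ s : ℝ, (∫ t in x..y, |(s + t) / 2 - m|) =
        ((s + y) / 2 - m) * |(s + y) / 2 - m| - ((s + x) / 2 - m) * |(s + x) / 2 - m| := by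
      intro s
      have hG : ∀ t : ℝ, HasDerivAt (fun t => ((s + t) / 2 - m) * |(s + t) / 2 - m|)
          (|(s + t) / 2 - m|) t := by
        intro t
        have hw : HasDerivAt (fun t : ℝ => (s + t) / 2 - m) (1 / 2) t := by
          simpa using (((hasDerivAt_id t).const_add s).div_const 2).sub_const m
        have := (hasDerivAt_mul_abs ((s + t) / 2 - m)).comp t hw
        refine this.congr_deriv ?_
        ring
      exact intervalIntegral.integral_eq_sub_of_hasDerivAt (fun t _ => hG t)
        ((continuous_abs.comp ((continuous_const.add continuous_id).div_const 2
          |>.sub continuous_const)).intervalIntegrable x y)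
    have houter : (∫ s in x..y, ∫ t in x..y, |(s + t) / 2 - m|)
        = (y - x) ^ 3 / 6 := by
      have hcong : Set.EqOn (fun s => ∫ t in x..y, |(s + t) / 2 - m|)
          (fun s => ((s - x) ^ 2 + (y - s) ^ 2) / 4) (Set.uIcc x y) := by
        intro s hs
        rw [Set.uIcc_of_le hxy.le] at hs
        obtain ⟨hsx, hsy⟩ := hs
        simp only
        rw [hinner s]
        have e1 : (s + y) / 2 - m = (s - x) / 2 := by rw [hm]; ring
        have e2 : (s + x) / 2 - m = (s - y) / 2 := by rw [hm]; ring
        rw [e1, e2, abs_of_nonneg (by linarith), abs_of_nonpos (by linarith)]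
        ring
      rw [intervalIntegral.integral_congr hcong]
      have hH : ∀ s : ℝ, HasDerivAt (fun s => ((s - x) ^ 3 - (y - s) ^ 3) / 12)
          (((s - x) ^ 2 + (y - s) ^ 2) / 4) s := by
        intro s
        have A : HasDerivAt (fun s : ℝ => (s - x) ^ 3) (3 * (s - x) ^ 2) s := by
          have := (hasDerivAt_pow 3 (s - x)).comp s ((hasDerivAt_id s).sub_const x)
          exact this.congr_deriv (by simp)
        have B : HasDerivAt (fun s : ℝ => (y - s) ^ 3) (-(3 * (y - s) ^ 2)) s := by
          have := (hasDerivAt_pow 3 (y - s)).comp s ((hasDerivAt_id s).const_sub y)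
          refine this.congr_deriv ?_
          simp
        have := (A.sub B).div_const 12
        refine this.congr_deriv ?_
        ring
      rw [intervalIntegral.integral_eq_sub_of_hasDerivAt (fun s _ => hH s)
        ((((continuous_id.sub continuous_const).pow 2).add
          ((continuous_const.sub continuous_id).pow 2)).div_const 4 |>.intervalIntegrable x y)]
      ring
    rw [houter]
    have fx : |x - m| = (y - x) / 2 := by
      rw [hm, abs_of_nonpos (by linarith)]; ring
    have fy : |y - m| = (y - x) / 2 := by
      rw [hm, abs_of_nonneg (by linarith)]; ring
    have fm : |m - m| = (0:ℝ) := by simp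
    simp only [fx, fy, fm]
    have hR : 1 / (y - x) ^ 2 * ((y - x) ^ 3 / 6) = (y - x) / 6 := by
      field_simp
    rw [hR]
    nlinarith [mul_pos (sub_pos.2 ha6) hyx]
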